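/- arXiv:1106.0809 — 2 statements merged into one kernel-verified Lean document; each statement's English description precedes it below -/
import Mathlib

section
/- Let n and r be positive integers with 1 ≤ r < n. The complement graph C(2n, r)^c is non-singular if and only if: (1) n and r have the same parity, (2) gcd(n, r+1) = 1, and (3) the highest power of 2 dividing n is strictly smaller than the highest power of 2 dividing n − r. -/
/-!
The matrix is the transpose of the circulant matrix with first column `v d = [d ∈ S]`, and the
Fourier matrix `(ζ^(ij))` of a primitive `m`-th root of unity `ζ` (a Vandermonde matrix)
diagonalises every circulant matrix over `ZMod m`. Hence the matrix is non-singular iff the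
representer `∑ d, v d * ω ^ d` vanishes at no `2n`-th root of unity `ω`, and here it factors as
`ω^(r+1) * (1 + ω^(n-r)) * (1 + ω + ⋯ + ω^(n-r-2))`.

Since `-1 = ζ^n`, the middle factor vanishes at some `2n`-th root of unity iff
`ω^(n-r) = ζ^n` is solvable, i.e. iff `gcd(n-r, 2n) ∣ n`, i.e. iff `v₂(n-r) ≤ v₂(n)`. A root
of unity `ω ≠ 1` kills the geometric factor iff `ω^(n-r-1) = 1`, so some `2n`-th root of unity
does iff `gcd(2n, n-r-1) ≠ 1`; and `gcd(2n, n-r-1) = 1` says exactly that `n-r-1` is odd and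
`gcd(n, r+1) = 1`.
-/

open Finset

theorem ZMod.sum_val_eq_sum_range {M : Type*} [AddCommMonoid M] (m : ℕ) [NeZero m]
    (f : ℕ → M) : ∑ d : ZMod m, f d.val = ∑ a ∈ range m, f a := by
  obtain ⟨k, rfl⟩ := Nat.exists_eq_succ_of_ne_zero (NeZero.ne m)
  exact Fin.sum_univ_eq_sum_range f (k + 1)

theorem pow_val_add_of_pow_eq_one {M : Type*} [Monoid M] {m : ℕ} [NeZero m] {ω : M}
    (hω : ω ^ m = 1) (a b : ZMod m) : ω ^ (a + b).val = ω ^ a.val * ω ^ b.val := by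
  rw [ZMod.val_add, ← pow_eq_pow_mod _ hω, pow_add]

theorem geom_sum_eq_zero_iff_pow_eq_one {K : Type*} [Field K] {ω : K} (hω : ω ≠ 1) (k : ℕ) :
    ∑ t ∈ range k, ω ^ t = 0 ↔ ω ^ k = 1 := by
  rw [geom_sum_eq hω, div_eq_zero_iff, sub_eq_zero, sub_eq_zero, or_iff_left hω]

namespace IsPrimitiveRoot

section Circulant

open Matrix

variable {R : Type*} [CommRing R] [IsDomain R] {m : ℕ} [NeZero m] {ζ : R}

theorem det_circulant (hζ : IsPrimitiveRoot ζ m) (v : ZMod m → R) :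
    (circulant v).det = ∏ i : ZMod m, ∑ d, v d * (ζ ^ i.val) ^ d.val := by
  set F : Matrix (ZMod m) (ZMod m) R := of fun i j => (ζ ^ i.val) ^ j.val
  have hF : F.det ≠ 0 := by
    obtain ⟨k, rfl⟩ := Nat.exists_eq_succ_of_ne_zero (NeZero.ne m)
    change (vandermonde fun i : Fin (k + 1) => ζ ^ (i : ℕ)).det ≠ 0
    rw [det_vandermonde_ne_zero_iff]
    exact fun i j h => Fin.ext (hζ.pow_inj i.isLt j.isLt h)
  have hFC : F * circulant v = diagonal (fun i => ∑ d, v d * (ζ ^ i.val) ^ d.val) * F := by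
    ext i j
    have hroot : (ζ ^ i.val) ^ m = 1 := by rw [pow_right_comm, hζ.pow_eq_one, one_pow]
    rw [diagonal_mul, mul_apply, ← Equiv.sum_comp (Equiv.addRight j), sum_mul]
    refine sum_congr rfl fun d _ => ?_
    simp only [Equiv.coe_addRight, F, of_apply, circulant_apply, add_sub_cancel_right,
      pow_val_add_of_pow_eq_one hroot]
    ring
  have hdet := congrArg det hFC
  rw [det_mul, det_mul, det_diagonal, mul_comm] at hdet
  exact mul_right_cancel₀ hF hdet

theorem det_circulant_ne_zero_iff (hζ : IsPrimitiveRoot ζ m) (v : ZMod m → R) :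
    (circulant v).det ≠ 0 ↔ ∀ ω : R, ω ^ m = 1 → ∑ d, v d * ω ^ d.val ≠ 0 := by
  rw [hζ.det_circulant, prod_ne_zero_iff]
  refine ⟨fun h ω hω => ?_, fun h i _ => h _ ?_⟩
  · obtain ⟨i, hi, rfl⟩ := hζ.eq_pow_of_pow_eq_one hω
    simpa [ZMod.val_cast_of_lt hi] using h (i : ZMod m) (mem_univ _)
  · rw [pow_right_comm, hζ.pow_eq_one, one_pow]

end Circulant

variable {K : Type*} [Field K] {m : ℕ} [NeZero m] {ζ : K}

theorem exists_pow_eq_pow_iff_gcd_dvd (hζ : IsPrimitiveRoot ζ m) (k a : ℕ) :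
    (∃ ω : K, ω ^ m = 1 ∧ ω ^ k = ζ ^ a) ↔ k.gcd m ∣ a := by
  have hζ0 : ζ ≠ 0 := hζ.ne_zero (NeZero.ne m)
  have hpow : ∀ x y : ℤ, ζ ^ ((k : ℤ) * x + m * y) = (ζ ^ x) ^ k := fun x y => by
    rw [zpow_add₀ hζ0, zpow_mul, zpow_mul, hζ.zpow_eq_one, one_zpow, mul_one,
      ← zpow_natCast, ← zpow_mul, ← zpow_mul, mul_comm]
  rw [← Int.gcd_natCast_natCast, Int.gcd_dvd_iff]
  constructor
  · rintro ⟨ω, hω, hωk⟩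
    obtain ⟨i, -, rfl⟩ := hζ.eq_pow_of_pow_eq_one hω
    have : ζ ^ ((k : ℤ) * i - a) = 1 := by
      rw [zpow_sub₀ hζ0, div_eq_one_iff_eq (zpow_ne_zero _ hζ0), mul_comm]
      exact_mod_cast (pow_mul ζ i k).trans hωk
    obtain ⟨c, hc⟩ := (hζ.zpow_eq_one_iff_dvd _).mp this
    exact ⟨i, -c, by linarith⟩
  · rintro ⟨x, y, hxy⟩
    refine ⟨ζ ^ x, ?_, ?_⟩
    · rw [← zpow_natCast, ← zpow_mul, mul_comm, zpow_mul, hζ.zpow_eq_one, one_zpow]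
    · rw [← hpow x y, ← hxy, zpow_natCast]

theorem forall_geom_sum_ne_zero_iff_coprime [CharZero K] (hζ : IsPrimitiveRoot ζ m)
    (hm : 1 < m) (k : ℕ) :
    (∀ ω : K, ω ^ m = 1 → ∑ t ∈ range k, ω ^ t ≠ 0) ↔ m.Coprime k := by
  rw [← not_iff_not]
  push Not
  constructor
  · rintro ⟨ω, hωm, hsum⟩ hcop
    by_cases hω : ω = 1
    · subst hω
      simp only [one_pow, sum_const, card_range, nsmul_eq_mul, mul_one, Nat.cast_eq_zero] at hsum
      subst hsum
      exact hm.ne' (Nat.coprime_zero_right m |>.mp hcop)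
    · exact hω <| (pow_eq_one_iff_of_coprime hcop).mp
        ⟨hωm, (geom_sum_eq_zero_iff_pow_eq_one hω k).mp hsum⟩
  · intro hcop
    set g := m.gcd k
    have hgm : m / g * g = m := Nat.div_mul_cancel (Nat.gcd_dvd_left m k)
    have hg : 1 < g := by
      have := Nat.gcd_pos_of_pos_left k (NeZero.pos m)
      omega
    have hωg : (ζ ^ (m / g)) ^ g = 1 := by rw [← pow_mul, hgm, hζ.pow_eq_one]
    have hω : ζ ^ (m / g) ≠ 1 := by
      apply hζ.pow_ne_one_of_pos_of_lt
      · exact (Nat.div_pos (Nat.gcd_le_left k (NeZero.pos m)) (by omega)).ne'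
      · exact Nat.div_lt_self (NeZero.pos m) hg
    refine ⟨ζ ^ (m / g), (pow_gcd_eq_one.mp hωg).1, ?_⟩
    rw [geom_sum_eq_zero_iff_pow_eq_one hω]
    exact (pow_gcd_eq_one.mp hωg).2

end IsPrimitiveRoot

theorem Nat.coprime_two_mul_sub_iff {n s : ℕ} (hs : s ≤ n) :
    (2 * n).Coprime (n - s) ↔ ¬ 2 ∣ n - s ∧ n.Coprime s := by
  rw [Nat.coprime_mul_iff_left, Nat.prime_two.coprime_iff_not_dvd, Nat.coprime_self_sub_right hs]

theorem Nat.gcd_two_mul_dvd_iff_padicValNat_le {a b : ℕ} (ha : a ≠ 0) (hb : b ≠ 0) :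
    a.gcd (2 * b) ∣ b ↔ padicValNat 2 a ≤ padicValNat 2 b := by
  rw [← Nat.factorization_le_iff_dvd (Nat.gcd_ne_zero_left ha) hb,
    Nat.factorization_gcd ha (mul_ne_zero two_ne_zero hb),
    Nat.factorization_mul two_ne_zero hb, Nat.prime_two.factorization, Finsupp.le_def,
    ← Nat.factorization_def a Nat.prime_two, ← Nat.factorization_def b Nat.prime_two]
  refine ⟨fun h => ?_, fun h p => ?_⟩
  · have := h 2
    simp only [Finsupp.inf_apply, Finsupp.add_apply, Finsupp.single_eq_same] at this
    omega
  · rcases eq_or_ne p 2 with rfl | hp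
    · simp only [Finsupp.inf_apply, Finsupp.add_apply, Finsupp.single_eq_same]
      omega
    · simp [Finsupp.single_eq_of_ne hp]

theorem sum_complement_row {R : Type*} [CommSemiring R] {n r : ℕ} [NeZero (2 * n)]
    (hrn : r < n) (ω : R) :
    ∑ d : ZMod (2 * n), (if (r + 1 ≤ d.val ∧ d.val ≤ n - 1) ∨
        (n + 1 ≤ d.val ∧ d.val ≤ 2 * n - r - 1) then (1 : R) else 0) * ω ^ d.val =
      ω ^ (r + 1) * (1 + ω ^ (n - r)) * ∑ t ∈ range (n - r - 1), ω ^ t := by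
  rw [ZMod.sum_val_eq_sum_range (2 * n) fun a => (if (r + 1 ≤ a ∧ a ≤ n - 1) ∨
    (n + 1 ≤ a ∧ a ≤ 2 * n - r - 1) then (1 : R) else 0) * ω ^ a]
  simp only [ite_mul, one_mul, zero_mul]
  have hsupp : (range (2 * n)).filter (fun a => (r + 1 ≤ a ∧ a ≤ n - 1) ∨
      (n + 1 ≤ a ∧ a ≤ 2 * n - r - 1)) = Ico (r + 1) n ∪ Ico (n + 1) (2 * n - r) := by
    ext a
    simp only [mem_filter, mem_range, mem_union, mem_Ico]
    omega
  have hdisj : Disjoint (Ico (r + 1) n) (Ico (n + 1) (2 * n - r)) :=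
    disjoint_left.2 fun a h1 h2 => by simp only [mem_Ico] at h1 h2; omega
  rw [← sum_filter, hsupp, sum_union hdisj, sum_Ico_eq_sum_range, sum_Ico_eq_sum_range,
    show n - (r + 1) = n - r - 1 by omega, show 2 * n - r - (n + 1) = n - r - 1 by omega]
  simp only [pow_add, ← mul_sum]
  have hn : ω ^ n = ω ^ r * ω ^ (n - r) := by rw [← pow_add, Nat.add_sub_cancel' hrn.le]
  rw [hn]
  ring

theorem IsPrimitiveRoot.forall_complement_row_sum_ne_zero_iff {K : Type*} [Field K]
    [CharZero K] {n r : ℕ} {ζ : K} (hζ : IsPrimitiveRoot ζ (2 * n)) (hrn : r < n) :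
    (∀ ω : K, ω ^ (2 * n) = 1 →
        ω ^ (r + 1) * (1 + ω ^ (n - r)) * ∑ t ∈ range (n - r - 1), ω ^ t ≠ 0) ↔
      ¬ (n - r).gcd (2 * n) ∣ n ∧ (2 * n).Coprime (n - r - 1) := by
  have : NeZero (2 * n) := ⟨by omega⟩
  have hneg : ζ ^ n = -1 := by
    have hζn := hζ.pow_of_dvd (p := n) (by omega) (dvd_mul_left n 2)
    rw [Nat.mul_div_cancel _ (by omega)] at hζn
    exact hζn.eq_neg_one_of_two_right
  rw [← hζ.exists_pow_eq_pow_iff_gcd_dvd, hneg,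
    ← hζ.forall_geom_sum_ne_zero_iff_coprime (by omega)]
  simp only [not_exists, not_and, ← forall_and]
  refine forall_congr' fun ω => imp_congr_right fun hω => ?_
  have hω0 : ω ≠ 0 := (IsUnit.of_pow_eq_one hω (by omega)).ne_zero
  simp [hω0, add_eq_zero_iff_eq_neg']

theorem C2nr_complement_nonsingular_iff_general (n r : ℕ) [NeZero (2 * n)]
    (hrn : r < n) :
    (Matrix.of fun i j : ZMod (2 * n) =>
        if (r + 1 ≤ (j - i).val ∧ (j - i).val ≤ n - 1) ∨
            (n + 1 ≤ (j - i).val ∧ (j - i).val ≤ 2 * n - r - 1) then (1 : ℚ)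
        else 0).det ≠ 0 ↔
      (n % 2 = r % 2 ∧ Nat.gcd n (r + 1) = 1 ∧
        padicValNat 2 n < padicValNat 2 (n - r)) := by
  obtain ⟨ζ, hζ⟩ : ∃ ζ : ℂ, IsPrimitiveRoot ζ (2 * n) :=
    ⟨_, Complex.isPrimitiveRoot_exp _ (NeZero.ne _)⟩
  change (Matrix.transpose <| Matrix.circulant fun d : ZMod (2 * n) =>
    if (r + 1 ≤ d.val ∧ d.val ≤ n - 1) ∨ (n + 1 ≤ d.val ∧ d.val ≤ 2 * n - r - 1) then (1 : ℚ)
    else 0).det ≠ 0 ↔ _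
  rw [Matrix.det_transpose, ← (algebraMap ℚ ℂ).injective.ne_iff' (map_zero _), RingHom.map_det,
    RingHom.mapMatrix_apply, Matrix.map_circulant, hζ.det_circulant_ne_zero_iff]
  simp only [apply_ite, map_one, map_zero, sum_complement_row hrn]
  rw [hζ.forall_complement_row_sum_ne_zero_iff hrn,
    Nat.gcd_two_mul_dvd_iff_padicValNat_le (by omega) (by omega), not_le, Nat.sub_sub,
    Nat.coprime_two_mul_sub_iff (by omega), Nat.coprime_iff_gcd_eq_one,
    show ¬ 2 ∣ n - (r + 1) ↔ n % 2 = r % 2 by omega]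
  tauto

/-- The complement `C(2n,r)^c`, with first row
`[0^{r+1}, 1^{n-r-1}, 0, 1^{n-r-1}, 0^r]`, is non-singular iff `n` and `r`
have the same parity, `gcd(n, r+1) = 1`, and the 2-adic valuation of `n` is
strictly smaller than that of `n - r`. -/
theorem C2nr_complement_nonsingular_iff (n r : ℕ) [NeZero (2 * n)]
    (hr : 1 ≤ r) (hrn : r < n) :
    (Matrix.of fun i j : ZMod (2 * n) =>
        if (r + 1 ≤ (j - i).val ∧ (j - i).val ≤ n - 1) ∨
            (n + 1 ≤ (j - i).val ∧ (j - i).val ≤ 2 * n - r - 1) then (1 : ℚ)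
        else 0).det ≠ 0 ↔
      (n % 2 = r % 2 ∧ Nat.gcd n (r + 1) = 1 ∧
        padicValNat 2 n < padicValNat 2 (n - r)) :=
  C2nr_complement_nonsingular_iff_general n r hrn
end

section
/- Let X be the (r,s,t)-element circulant digraph on n vertices, whose circulant adjacency matrix has first row [1...1 (r times), 0...0 (t times), 1...1 (s times), 0...0 (n−r−s−t times)]. If gcd(n, r, s) > 1, then X is singular. -/
/-!
The adjacency matrix is the transpose of the circulant matrix of the indicator `c` of its first
row. Every additive character `ψ` of `ZMod n` is a left eigenvector of a circulant matrix, with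
eigenvalue `∑ k, c k * ψ k`; for `ψ k = ω ^ k.val` this is the representer polynomial `γ(ω)`.
Take `ω` a primitive `d`-th root of unity, `d = gcd(n, r, s) > 1`: since `ω ^ r = ω ^ s = 1` and
`ω ≠ 1`, the identity `(ω - 1) γ(ω) = (ω ^ r - 1) + ω ^ (r + t) (ω ^ s - 1)` gives `γ(ω) = 0`.
-/

open Finset Matrix

namespace Matrix

variable {G R : Type*} [AddCommGroup G] [Fintype G] [CommRing R]

theorem addChar_vecMul_circulant (c : G → R) (ψ : AddChar G R) :
    ⇑ψ ᵥ* circulant c = (∑ k, c k * ψ k) • ⇑ψ := by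
  ext j
  simp only [vecMul, dotProduct, circulant_apply, Pi.smul_apply, smul_eq_mul, sum_mul]
  refine (Fintype.sum_equiv (Equiv.addRight j) _ _ fun k => ?_).symm
  rw [Equiv.coe_addRight, add_sub_cancel_right, AddChar.map_add_eq_mul]
  ring

theorem det_circulant_eq_zero_of_sum_mul_addChar_eq_zero [IsDomain R] [DecidableEq G]
    {c : G → R} (ψ : AddChar G R) (h : ∑ k, c k * ψ k = 0) : (circulant c).det = 0 := by
  refine exists_vecMul_eq_zero_iff.mp
    ⟨ψ, fun hψ => ?_, by rw [addChar_vecMul_circulant, h, zero_smul]⟩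
  simpa using congrFun hψ 0

end Matrix

theorem ZMod.sum_comp_val {M : Type*} [AddCommMonoid M] (n : ℕ) [NeZero n] (f : ℕ → M) :
    ∑ k : ZMod n, f k.val = ∑ m ∈ range n, f m :=
  sum_nbij' ZMod.val Nat.cast (fun k _ => mem_range.mpr k.val_lt) (fun _ _ => mem_univ _)
    (fun k _ => ZMod.natCast_zmod_val k) (fun _ hm => ZMod.val_cast_of_lt (mem_range.mp hm))
    fun _ _ => rfl

theorem geom_sum_eq_zero_of_pow_eq_one {K : Type*} [DivisionRing K] {x : K} {m : ℕ}
    (hx : x ≠ 1) (h : x ^ m = 1) : ∑ i ∈ range m, x ^ i = 0 := by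
  rw [geom_sum_eq hx, h, sub_self, zero_div]

theorem sum_range_ite_two_blocks {M : Type*} [AddCommMonoid M] (f : ℕ → M) {n r s t : ℕ}
    (h : r + s + t ≤ n) :
    ∑ m ∈ range n, (if m < r ∨ (r + t ≤ m ∧ m < r + t + s) then f m else 0) =
      ∑ m ∈ range r, f m + ∑ m ∈ range s, f (r + t + m) := by
  have hblocks : {m ∈ range n | m < r ∨ (r + t ≤ m ∧ m < r + t + s)} =
      range r ∪ Ico (r + t) (r + t + s) := by
    ext m
    simp only [mem_filter, mem_range, mem_union, mem_Ico]
    omega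
  rw [← sum_filter, hblocks, sum_union, sum_Ico_eq_sum_range, add_tsub_cancel_left]
  rw [disjoint_left]
  simp only [mem_range, mem_Ico]
  omega

theorem sum_range_ite_two_blocks_pow_eq_zero {K : Type*} [DivisionRing K] {ω : K}
    {n r s t : ℕ} (h : r + s + t ≤ n) (hω : ω ≠ 1) (hr : ω ^ r = 1) (hs : ω ^ s = 1) :
    ∑ m ∈ range n, (if m < r ∨ (r + t ≤ m ∧ m < r + t + s) then ω ^ m else 0) = 0 := by
  simp only [sum_range_ite_two_blocks _ h, pow_add, ← mul_sum,
    geom_sum_eq_zero_of_pow_eq_one hω hr, geom_sum_eq_zero_of_pow_eq_one hω hs, mul_zero,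
    add_zero]

/-- If `gcd(n, r, s) > 1` then the `(r,s,t)`-element circulant digraph on `n`
vertices (first row `[1^r, 0^t, 1^s, 0^{n-r-s-t}]`) is singular. -/
theorem rst_circulant_singular_of_gcd (n r s t : ℕ) [NeZero n]
    (hsum : r + s + t ≤ n) (hgcd : 1 < Nat.gcd (Nat.gcd n r) s) :
    (Matrix.of fun i j : ZMod n =>
        if (j - i).val < r ∨ (r + t ≤ (j - i).val ∧ (j - i).val < r + t + s)
        then (1 : ℚ) else 0).det = 0 := by
  set d := Nat.gcd (Nat.gcd n r) s
  have hdn : d ∣ n := (Nat.gcd_dvd_left _ _).trans (Nat.gcd_dvd_left n r)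
  have hdr : d ∣ r := (Nat.gcd_dvd_left _ _).trans (Nat.gcd_dvd_right n r)
  have hds : d ∣ s := Nat.gcd_dvd_right _ _
  have hω := Complex.isPrimitiveRoot_exp d (by omega)
  set ω := Complex.exp (2 * Real.pi * Complex.I / d)
  let c : ZMod n → ℂ := fun k =>
    if k.val < r ∨ (r + t ≤ k.val ∧ k.val < r + t + s) then 1 else 0
  let ψ := AddChar.zmodChar n ((hω.pow_eq_one_iff_dvd n).mpr hdn)
  have hγ : ∑ k, c k * ψ k = 0 := by
    simp only [c, ψ, AddChar.zmodChar_apply, ite_mul, one_mul, zero_mul]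
    rw [ZMod.sum_comp_val n fun m => if m < r ∨ (r + t ≤ m ∧ m < r + t + s) then ω ^ m else 0]
    exact sum_range_ite_two_blocks_pow_eq_zero hsum (hω.ne_one hgcd)
      ((hω.pow_eq_one_iff_dvd r).mpr hdr) ((hω.pow_eq_one_iff_dvd s).mpr hds)
  apply Rat.cast_injective (α := ℂ)
  rw [Rat.cast_zero, ← Rat.coe_castHom, RingHom.map_det,
    ← det_circulant_eq_zero_of_sum_mul_addChar_eq_zero ψ hγ, ← det_transpose (circulant c)]
  congr 1
  ext i j
  simp only [c, RingHom.mapMatrix_apply, map_apply, of_apply, transpose_apply, circulant_apply,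
    Rat.coe_castHom, apply_ite Rat.cast, Rat.cast_one, Rat.cast_zero]
end
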